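/- Let m, n ≥ 0 and let λ be any partition. Then in ℤ[x_1,…,x_m,y_1,…,y_n] one has hs_λ(x; y) = Σ_{μ ⊆ λ} s_μ(x_1,…,x_m) · s_{λ'/μ'}(y_1,…,y_n), where the sum is over all partitions μ contained in λ, λ' and μ' denote the conjugate (transposed) partitions, s_μ is the Schur polynomial in m variables, and s_{λ'/μ'} is the skew Schur polynomial in n variables. -/

import Mathlib

/-! The barred cells of a hook tableau of shape `λ` form a Young diagram `μ ⊆ λ`: barred letters
precede unbarred ones and entries weakly increase along rows and columns. On `μ` the tableau is a
semistandard tableau in the barred letters. On `λ / μ` the unbarred entries increase strictly along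
rows and weakly down columns, so after transposition they form a semistandard tableau of shape
`λ' / μ'`. Conversely every such pair glues back to a hook tableau with barred cells `μ`, and the
weight of the glued tableau is the product of the two weights. -/

noncomputable section

open scoped Classical

namespace Stmt5

/-- Position of a letter in the totally ordered alphabet
`1̄ < ⋯ < m̄ < 1 < ⋯ < n` (barred letters `Sum.inl`, unbarred letters `Sum.inr`). -/
def code (m n : ℕ) : Fin m ⊕ Fin n → ℕ
  | Sum.inl a => (a : ℕ)
  | Sum.inr b => m + (b : ℕ)

/-- A hook tableau of shape `μ`: entries weakly increase along rows and columns,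
barred entries strictly increase down columns, unbarred entries strictly increase
along rows. Cells `(i, j)` have row index `i` and column index `j`. -/
def IsHookTableau (m n : ℕ) (μ : YoungDiagram)
    (f : {c // c ∈ μ.cells} → Fin m ⊕ Fin n) : Prop :=
  (∀ c c' : {c // c ∈ μ.cells},
      (c : ℕ × ℕ).1 = (c' : ℕ × ℕ).1 → (c : ℕ × ℕ).2 ≤ (c' : ℕ × ℕ).2 →
      code m n (f c) ≤ code m n (f c')) ∧
  (∀ c c' : {c // c ∈ μ.cells},
      (c : ℕ × ℕ).2 = (c' : ℕ × ℕ).2 → (c : ℕ × ℕ).1 ≤ (c' : ℕ × ℕ).1 →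
      code m n (f c) ≤ code m n (f c')) ∧
  (∀ c c' : {c // c ∈ μ.cells},
      (c : ℕ × ℕ).2 = (c' : ℕ × ℕ).2 → (c : ℕ × ℕ).1 < (c' : ℕ × ℕ).1 →
      (f c).isLeft → (f c').isLeft → code m n (f c) < code m n (f c')) ∧
  (∀ c c' : {c // c ∈ μ.cells},
      (c : ℕ × ℕ).1 = (c' : ℕ × ℕ).1 → (c : ℕ × ℕ).2 < (c' : ℕ × ℕ).2 →
      (f c).isRight → (f c').isRight → code m n (f c) < code m n (f c'))

/-- The (finite) set of hook tableaux of shape `μ`. -/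
def hookTableaux (m n : ℕ) (μ : YoungDiagram) :
    Finset ({c // c ∈ μ.cells} → Fin m ⊕ Fin n) :=
  Finset.univ.filter (IsHookTableau m n μ)

/-- The hook Schur polynomial `hs_μ(x_1,…,x_m; y_1,…,y_n)`: the generating function
of hook tableaux of shape `μ`, with `x_a = X (Sum.inl a)` and `y_b = X (Sum.inr b)`. -/
def hookSchur (m n : ℕ) (μ : YoungDiagram) : MvPolynomial (Fin m ⊕ Fin n) ℤ :=
  ∑ f ∈ hookTableaux m n μ, ∏ c, MvPolynomial.X (f c)

/-- Semistandardness of a filling of a (skew) set of cells by entries in `Fin N`: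
rows weakly increase, columns strictly increase. -/
def IsSemistandard {N : ℕ} (cs : Finset (ℕ × ℕ)) (f : {c // c ∈ cs} → Fin N) : Prop :=
  (∀ c c' : {c // c ∈ cs},
      (c : ℕ × ℕ).1 = (c' : ℕ × ℕ).1 → (c : ℕ × ℕ).2 ≤ (c' : ℕ × ℕ).2 → f c ≤ f c') ∧
  (∀ c c' : {c // c ∈ cs},
      (c : ℕ × ℕ).2 = (c' : ℕ × ℕ).2 → (c : ℕ × ℕ).1 < (c' : ℕ × ℕ).1 → f c < f c')

/-- Generating function of semistandard fillings of a set of cells in `N` variables. -/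
def genSchur (N : ℕ) (cs : Finset (ℕ × ℕ)) : MvPolynomial (Fin N) ℤ :=
  ∑ f ∈ Finset.univ.filter (IsSemistandard (N := N) cs), ∏ c, MvPolynomial.X (f c)

/-- The Schur polynomial `s_μ(z_1,…,z_N)`. -/
def schurPoly (N : ℕ) (μ : YoungDiagram) : MvPolynomial (Fin N) ℤ :=
  genSchur N μ.cells

/-- The skew Schur polynomial `s_{θ/κ}(z_1,…,z_N)`. -/
def skewSchur (N : ℕ) (θ κ : YoungDiagram) : MvPolynomial (Fin N) ℤ :=
  genSchur N (θ.cells \ κ.cells)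

/-- The Young diagram of a partition of `d`. -/
def toYoung {d : ℕ} (p : Nat.Partition d) : YoungDiagram :=
  YoungDiagram.ofRowLens (p.parts.sort (· ≥ ·)) (Multiset.pairwise_sort _ _).sortedGE

lemma card_eq_sum_rowLens (μ : YoungDiagram) : μ.card = μ.rowLens.sum := by
  have hrows : μ.card = ∑ i ∈ Finset.range (μ.colLen 0), (μ.row i).card :=
    Finset.card_eq_sum_card_fiberwise fun c hc => by
      rw [Finset.mem_coe, Finset.mem_range, ← YoungDiagram.mem_iff_lt_colLen]
      exact μ.up_left_mem le_rfl (Nat.zero_le _) hc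
  rw [hrows]
  exact Finset.sum_congr rfl fun i _ => (μ.rowLen_eq_card).symm

lemma rowLens_toYoung {k : ℕ} (p : Nat.Partition k) :
    (toYoung p).rowLens = p.parts.sort (· ≥ ·) :=
  YoungDiagram.rowLens_ofRowLens_eq_self fun _ hx => p.parts_pos ((Multiset.mem_sort _).1 hx)

lemma exists_toYoung_eq (μ : YoungDiagram) : ∃ p : Nat.Partition μ.card, toYoung p = μ := by
  refine ⟨⟨μ.rowLens, μ.pos_of_mem_rowLens _, by rw [Multiset.sum_coe, card_eq_sum_rowLens]⟩, ?_⟩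
  refine Eq.trans ?_ μ.ofRowLens_to_rowLens_eq_self
  unfold toYoung
  congr 1
  rw [Multiset.coe_sort]
  exact List.mergeSort_eq_self _ μ.rowLens_sorted.pairwise

lemma toYoung_sigma_injective :
    Function.Injective fun q : Σ k, Nat.Partition k => toYoung q.2 := by
  rintro ⟨k₁, p₁⟩ ⟨k₂, p₂⟩ h
  have hparts : p₁.parts = p₂.parts := by
    have hsort := congrArg YoungDiagram.rowLens h
    simp only [rowLens_toYoung] at hsort
    rw [← Multiset.sort_eq p₁.parts (· ≥ ·), hsort, Multiset.sort_eq]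
  obtain rfl : k₁ = k₂ := by rw [← p₁.parts_sum, ← p₂.parts_sum, hparts]
  rw [Nat.Partition.ext hparts]

section HookTableau

variable {m n : ℕ} {lam : YoungDiagram}

@[simp] lemma code_inl (a : Fin m) : code m n (Sum.inl a) = a := rfl

@[simp] lemma code_inr (b : Fin n) : code m n (Sum.inr b) = m + b := rfl

lemma code_lt_iff_isLeft (x : Fin m ⊕ Fin n) : code m n x < m ↔ x.isLeft := by
  cases x <;> simp

lemma code_inl_lt_code_inr (a : Fin m) (b : Fin n) :
    code m n (Sum.inl a) < code m n (Sum.inr b) := by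
  simp only [code_inl, code_inr]
  omega

lemma IsHookTableau.code_mono {f : {c // c ∈ lam.cells} → Fin m ⊕ Fin n}
    (hf : IsHookTableau m n lam f) {c c' : {c // c ∈ lam.cells}} (h : c.1 ≤ c'.1) :
    code m n (f c) ≤ code m n (f c') := by
  let corner : {c // c ∈ lam.cells} :=
    ⟨(c.1.1, c'.1.2), lam.isLowerSet (Prod.mk_le_mk.2 ⟨h.1, le_rfl⟩) c'.2⟩
  exact (hf.1 c corner rfl h.2).trans (hf.2.1 corner c' rfl h.1)

def barredCells (f : {c // c ∈ lam.cells} → Fin m ⊕ Fin n) : Finset (ℕ × ℕ) :=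
  {c ∈ lam.cells | ∃ hc : c ∈ lam.cells, (f ⟨c, hc⟩).isLeft}

lemma barredCells_subset (f : {c // c ∈ lam.cells} → Fin m ⊕ Fin n) :
    barredCells f ⊆ lam.cells :=
  Finset.filter_subset _ _

lemma mem_barredCells {f : {c // c ∈ lam.cells} → Fin m ⊕ Fin n} (c : {c // c ∈ lam.cells}) :
    c.1 ∈ barredCells f ↔ (f c).isLeft := by
  simp [barredCells, c.2]

lemma IsHookTableau.isLowerSet_barredCells {f : {c // c ∈ lam.cells} → Fin m ⊕ Fin n}
    (hf : IsHookTableau m n lam f) : IsLowerSet (barredCells f : Set (ℕ × ℕ)) := by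
  intro b a hab hb
  have hb' : b ∈ lam.cells := barredCells_subset f hb
  let a' : {c // c ∈ lam.cells} := ⟨a, lam.isLowerSet hab hb'⟩
  have hbarred : (f ⟨b, hb'⟩).isLeft := (mem_barredCells ⟨b, hb'⟩).1 hb
  rw [Finset.mem_coe, mem_barredCells a', ← code_lt_iff_isLeft]
  exact (hf.code_mono (c' := ⟨b, hb'⟩) hab).trans_lt ((code_lt_iff_isLeft _).2 hbarred)

end HookTableau

section Glue

variable {m n : ℕ} {lam μ : YoungDiagram} (hμ : μ.cells ⊆ lam.cells)

lemma mem_transpose_sdiff_iff {c : ℕ × ℕ} :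
    c ∈ lam.transpose.cells \ μ.transpose.cells ↔ c.swap ∈ lam.cells ∧ c.swap ∉ μ.cells := by
  simp [YoungDiagram.mem_transpose]

lemma swap_mem_transpose_sdiff {c : ℕ × ℕ} (hc : c ∈ lam.cells) (hcμ : c ∉ μ.cells) :
    c.swap ∈ lam.transpose.cells \ μ.transpose.cells :=
  mem_transpose_sdiff_iff.2 ⟨hc, hcμ⟩

def cellsEquiv : {c // c ∈ lam.cells} ≃
    {c // c ∈ μ.cells} ⊕ {c // c ∈ lam.transpose.cells \ μ.transpose.cells} where
  toFun c := if hc : c.1 ∈ μ.cells then .inl ⟨c.1, hc⟩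
    else .inr ⟨c.1.swap, swap_mem_transpose_sdiff c.2 hc⟩
  invFun := Sum.elim (fun c => ⟨c.1, hμ c.2⟩)
    (fun c => ⟨c.1.swap, (mem_transpose_sdiff_iff.1 c.2).1⟩)
  left_inv c := by by_cases hc : c.1 ∈ μ.cells <;> simp [hc]
  right_inv := by
    rintro (c | c)
    · simp [c.2]
    · simp [(mem_transpose_sdiff_iff.1 c.2).2]

def glue (g : {c // c ∈ μ.cells} → Fin m)
    (h : {c // c ∈ lam.transpose.cells \ μ.transpose.cells} → Fin n) :
    {c // c ∈ lam.cells} → Fin m ⊕ Fin n :=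
  Sum.map g h ∘ cellsEquiv hμ

variable {hμ} {g : {c // c ∈ μ.cells} → Fin m}
  {h : {c // c ∈ lam.transpose.cells \ μ.transpose.cells} → Fin n}

lemma glue_of_mem {c : {c // c ∈ lam.cells}} (hc : c.1 ∈ μ.cells) :
    glue hμ g h c = .inl (g ⟨c.1, hc⟩) := by
  simp only [glue, cellsEquiv, Equiv.coe_fn_mk, Function.comp_apply, dif_pos hc, Sum.map_inl]

lemma glue_of_not_mem {c : {c // c ∈ lam.cells}} (hc : c.1 ∉ μ.cells) :
    glue hμ g h c = .inr (h ⟨c.1.swap, swap_mem_transpose_sdiff c.2 hc⟩) := by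
  simp only [glue, cellsEquiv, Equiv.coe_fn_mk, Function.comp_apply, dif_neg hc, Sum.map_inr]

lemma glue_cellsEquiv_symm (x : {c // c ∈ μ.cells} ⊕
    {c // c ∈ lam.transpose.cells \ μ.transpose.cells}) :
    glue hμ g h ((cellsEquiv hμ).symm x) = Sum.map g h x := by
  simp [glue]

lemma isLeft_glue_iff (c : {c // c ∈ lam.cells}) :
    (glue hμ g h c).isLeft ↔ c.1 ∈ μ.cells := by
  by_cases hc : c.1 ∈ μ.cells
  · simp [glue_of_mem hc, hc]
  · simp [glue_of_not_mem hc, hc]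

lemma isHookTableau_glue (hg : IsSemistandard μ.cells g)
    (hh : IsSemistandard (lam.transpose.cells \ μ.transpose.cells) h) :
    IsHookTableau m n lam (glue hμ g h) := by
  have barred_lt {c c' : {c // c ∈ lam.cells}} (hc : c.1 ∈ μ.cells) (hc' : c'.1 ∉ μ.cells) :
      code m n (glue hμ g h c) < code m n (glue hμ g h c') := by
    rw [glue_of_mem hc, glue_of_not_mem hc']
    exact code_inl_lt_code_inr _ _
  refine ⟨fun c c' hrow hcol => ?_, fun c c' hcol hrow => ?_,
    fun c c' hcol hrow hl hl' => ?_, fun c c' hrow hcol hr hr' => ?_⟩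
  · by_cases hc' : c'.1 ∈ μ.cells
    · have hc : c.1 ∈ μ.cells := μ.isLowerSet (Prod.le_def.2 ⟨hrow.le, hcol⟩) hc'
      rw [glue_of_mem hc, glue_of_mem hc']
      exact hg.1 _ _ hrow hcol
    by_cases hc : c.1 ∈ μ.cells
    · exact (barred_lt hc hc').le
    rcases hcol.eq_or_lt with hcol | hcol
    · rw [Subtype.ext (Prod.ext hrow hcol)]
    · rw [glue_of_not_mem hc, glue_of_not_mem hc']
      exact Nat.add_le_add_left (hh.2 _ _ hrow hcol).le m
  · by_cases hc' : c'.1 ∈ μ.cells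
    · have hc : c.1 ∈ μ.cells := μ.isLowerSet (Prod.le_def.2 ⟨hrow, hcol.le⟩) hc'
      rcases hrow.eq_or_lt with hrow | hrow
      · rw [Subtype.ext (Prod.ext hrow hcol)]
      · rw [glue_of_mem hc, glue_of_mem hc']
        exact (hg.2 _ _ hcol hrow).le
    by_cases hc : c.1 ∈ μ.cells
    · exact (barred_lt hc hc').le
    · rw [glue_of_not_mem hc, glue_of_not_mem hc']
      exact Nat.add_le_add_left (hh.1 _ _ hcol hrow) m
  · rw [isLeft_glue_iff] at hl hl'
    rw [glue_of_mem hl, glue_of_mem hl']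
    exact hg.2 _ _ hcol hrow
  · rw [← Sum.not_isLeft, isLeft_glue_iff] at hr hr'
    rw [glue_of_not_mem hr, glue_of_not_mem hr']
    exact Nat.add_lt_add_left (hh.2 _ _ hrow hcol) m

lemma IsHookTableau.isSemistandard_of_glue (hf : IsHookTableau m n lam (glue hμ g h)) :
    IsSemistandard μ.cells g ∧ IsSemistandard (lam.transpose.cells \ μ.transpose.cells) h := by
  let e := cellsEquiv hμ
  have code_left (d) : code m n (glue hμ g h (e.symm (.inl d))) = g d := by
    rw [glue_cellsEquiv_symm]; rfl
  have code_right (d) : code m n (glue hμ g h (e.symm (.inr d))) = m + h d := by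
    rw [glue_cellsEquiv_symm]; rfl
  refine ⟨⟨fun d d' hrow hcol => ?_, fun d d' hcol hrow => ?_⟩,
    ⟨fun d d' hrow hcol => ?_, fun d d' hcol hrow => ?_⟩⟩
  · have := hf.1 (e.symm (.inl d)) (e.symm (.inl d')) hrow hcol
    rwa [code_left, code_left] at this
  · have := hf.2.2.1 (e.symm (.inl d)) (e.symm (.inl d')) hcol hrow
      (by rw [glue_cellsEquiv_symm]; rfl) (by rw [glue_cellsEquiv_symm]; rfl)
    rwa [code_left, code_left] at this
  · have := hf.2.1 (e.symm (.inr d)) (e.symm (.inr d')) hrow hcol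
    rw [code_right, code_right] at this
    exact Nat.le_of_add_le_add_left this
  · have := hf.2.2.2 (e.symm (.inr d)) (e.symm (.inr d')) hcol hrow
      (by rw [glue_cellsEquiv_symm]; rfl) (by rw [glue_cellsEquiv_symm]; rfl)
    rw [code_right, code_right] at this
    exact Nat.lt_of_add_lt_add_left this

variable {g' : {c // c ∈ μ.cells} → Fin m}
  {h' : {c // c ∈ lam.transpose.cells \ μ.transpose.cells} → Fin n}

lemma barredCells_glue : barredCells (glue hμ g h) = μ.cells := by
  ext c
  by_cases hc : c ∈ lam.cells
  · exact (mem_barredCells ⟨c, hc⟩).trans (isLeft_glue_iff _)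
  · exact iff_of_false (fun hb => hc (barredCells_subset _ hb)) (fun hcμ => hc (hμ hcμ))

lemma glue_injective (heq : glue hμ g h = glue hμ g' h') : g = g' ∧ h = h' := by
  have hmap : Sum.map g h = Sum.map g' h' := (cellsEquiv hμ).surjective.injective_comp_right heq
  exact ⟨funext fun d => Sum.inl_injective (congrFun hmap (.inl d)),
    funext fun d => Sum.inr_injective (congrFun hmap (.inr d))⟩

variable (hμ) in
lemma exists_glue_eq {f : {c // c ∈ lam.cells} → Fin m ⊕ Fin n}
    (hf : barredCells f = μ.cells) : ∃ g h, glue hμ g h = f := by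
  let e := cellsEquiv hμ
  have hleft (d : {c // c ∈ μ.cells}) : (f (e.symm (.inl d))).isLeft :=
    (mem_barredCells _).1 (by rw [hf]; exact d.2)
  have hright (d : {c // c ∈ lam.transpose.cells \ μ.transpose.cells}) :
      (f (e.symm (.inr d))).isRight := by
    rw [← Sum.not_isLeft, ← mem_barredCells, hf]
    exact (mem_transpose_sdiff_iff.1 d.2).2
  refine ⟨fun d => (f (e.symm (.inl d))).getLeft (hleft d),
    fun d => (f (e.symm (.inr d))).getRight (hright d), funext fun c => ?_⟩
  rw [← e.symm_apply_apply c, glue_cellsEquiv_symm]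
  rcases e c with d | d <;> simp

lemma prod_glue {M : Type*} [CommMonoid M] (φ : Fin m ⊕ Fin n → M) :
    ∏ c, φ (glue hμ g h c) = (∏ d, φ (.inl (g d))) * ∏ d, φ (.inr (h d)) :=
  ((cellsEquiv hμ).prod_comp (φ ∘ Sum.map g h)).trans (Fintype.prod_sum_type _)

end Glue

open MvPolynomial in
theorem sum_hookTableaux_barredCells_eq {m n : ℕ} {lam μ : YoungDiagram}
    (hμ : μ.cells ⊆ lam.cells) :
    ∑ f ∈ hookTableaux m n lam with barredCells f = μ.cells,
        ∏ c, (X (f c) : MvPolynomial (Fin m ⊕ Fin n) ℤ) =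
      rename Sum.inl (genSchur m μ.cells) *
        rename Sum.inr (genSchur n (lam.transpose.cells \ μ.transpose.cells)) := by
  simp only [genSchur, map_sum, map_prod, rename_X, Finset.sum_mul_sum, ← Finset.sum_product']
  symm
  refine Finset.sum_bij (fun gh _ => glue hμ gh.1 gh.2) (fun gh hgh => ?_)
    (fun gh _ gh' _ heq => Prod.ext_iff.2 (glue_injective heq)) (fun f hf => ?_)
    (fun gh _ => (prod_glue _).symm)
  · simp only [Finset.mem_product, Finset.mem_filter, Finset.mem_univ, true_and] at hgh
    simp only [hookTableaux, Finset.mem_filter, Finset.mem_univ, true_and]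
    exact ⟨isHookTableau_glue hgh.1 hgh.2, barredCells_glue⟩
  · simp only [hookTableaux, Finset.mem_filter, Finset.mem_univ, true_and] at hf
    obtain ⟨g, h, rfl⟩ := exists_glue_eq hμ hf.2
    refine ⟨(g, h), ?_, rfl⟩
    simpa only [Finset.mem_product, Finset.mem_filter, Finset.mem_univ, true_and]
      using hf.1.isSemistandard_of_glue

def subpartitions (lam : YoungDiagram) : Finset (Σ k, Nat.Partition k) :=
  (Finset.range (lam.card + 1)).sigma fun k =>
    (Finset.univ : Finset (Nat.Partition k)).filter fun p => (toYoung p).cells ⊆ lam.cells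

lemma IsHookTableau.exists_mem_subpartitions {m n : ℕ} {lam : YoungDiagram}
    {f : {c // c ∈ lam.cells} → Fin m ⊕ Fin n} (hf : IsHookTableau m n lam f) :
    ∃ q ∈ subpartitions lam, (toYoung q.2).cells = barredCells f := by
  let β : YoungDiagram := ⟨barredCells f, hf.isLowerSet_barredCells⟩
  obtain ⟨p, hp⟩ := exists_toYoung_eq β
  refine ⟨⟨β.card, p⟩, Finset.mem_sigma.2 ⟨?_, ?_⟩, by rw [hp]⟩
  · exact Finset.mem_range_succ_iff.2 (Finset.card_le_card (barredCells_subset f))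
  · rw [Finset.mem_filter, hp]
    exact ⟨Finset.mem_univ _, barredCells_subset f⟩

theorem hookSchur_eq_sum_subpartitions (m n : ℕ) (lam : YoungDiagram) :
    hookSchur m n lam = ∑ q ∈ subpartitions lam,
      ∑ f ∈ hookTableaux m n lam with barredCells f = (toYoung q.2).cells,
        ∏ c, MvPolynomial.X (f c) := by
  have hinj : Set.InjOn (fun q : Σ k, Nat.Partition k => (toYoung q.2).cells) (subpartitions lam) :=
    fun q _ q' _ h => toYoung_sigma_injective (YoungDiagram.ext h)
  rw [hookSchur, ← Finset.sum_fiberwise_of_maps_to (g := barredCells)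
    (t := (subpartitions lam).image fun q => (toYoung q.2).cells) (fun f hf => ?_),
    Finset.sum_image hinj]
  obtain ⟨q, hq, hcells⟩ := (Finset.mem_filter.1 hf).2.exists_mem_subpartitions
  exact Finset.mem_image.2 ⟨q, hq, hcells⟩

/-- `hs_λ(x; y) = ∑_{μ ⊆ λ} s_μ(x) · s_{λ'/μ'}(y)`, the sum being over all
partitions `μ` contained in `λ` (parametrized by their size `k` and the partition
`p` of `k`), with `λ'`, `μ'` the conjugate partitions. -/
theorem statement5 (m n : ℕ) (lam : YoungDiagram) :
    hookSchur m n lam =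
      ∑ k ∈ Finset.range (lam.card + 1),
        ∑ p ∈ (Finset.univ : Finset (Nat.Partition k)).filter
            (fun p => (toYoung p).cells ⊆ lam.cells),
          (MvPolynomial.rename (Sum.inl : Fin m → Fin m ⊕ Fin n)
              (schurPoly m (toYoung p))) *
            (MvPolynomial.rename (Sum.inr : Fin n → Fin m ⊕ Fin n)
              (skewSchur n lam.transpose (toYoung p).transpose)) := by
  rw [Finset.sum_sigma', hookSchur_eq_sum_subpartitions]
  exact Finset.sum_congr rfl fun q hq =>
    sum_hookTableaux_barredCells_eq (Finset.mem_filter.1 (Finset.mem_sigma.1 hq).2).2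

end Stmt5
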